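/- If φ is an automorphism of the unit disc, then for every n ≥ 1 the n-th iterate φ_n satisfies ‖C_{φ_n}‖_{B→B} ≤ 1 + n·ρ(φ(0),0), where ρ is the hyperbolic distance on the unit disc. -/

import Mathlib

/-!
A Bloch function `f` with seminorm `M` satisfies `‖f w - f 0‖ ≤ M ρ(w, 0) = M artanh |w|`: on the
radius to `w`, `t ↦ f(tw) - f(0)` has derivative of norm at most `M |w| / (1 - t²|w|²)`, which is
the derivative of `t ↦ M artanh(t|w|)`. A disc automorphism `φ` satisfies the Schwarz–Pick
identity `(1 - |z|²) |φ'(z)| = 1 - |φ(z)|²`, so composing with `φ` (hence with each iterate `φₙ`)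
does not increase the Bloch seminorm. Telescoping along the orbit `0, φ(0), φ₂(0), …` and applying
the first bound to `f ∘ φⱼ` at `φ(0)` gives `‖f(φₙ(0)) - f(0)‖ ≤ n M ρ(φ(0), 0)`, whence
`‖f ∘ φₙ‖_B ≤ ‖f(0)‖ + M + n M ρ(φ(0), 0) ≤ (1 + n ρ(φ(0), 0)) ‖f‖_B`.
-/

open Complex Metric Set Filter MeasureTheory Finset

noncomputable section

/-- The open unit disc in ℂ. -/
def D1 : Set ℂ := Metric.ball 0 1

/-- Analytic (holomorphic) on the open unit disc. -/
def AnalyticOnD (f : ℂ → ℂ) : Prop := DifferentiableOn ℂ f D1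

/-- Bloch seminorm. -/
def blochSemi (f : ℂ → ℂ) : ℝ := ⨆ z : D1, (1 - ‖(z : ℂ)‖ ^ 2) * ‖deriv f (z : ℂ)‖

/-- Bloch norm. -/
def blochNorm (f : ℂ → ℂ) : ℝ := ‖f 0‖ + blochSemi f

/-- Membership in the Bloch space. -/
def InBloch (f : ℂ → ℂ) : Prop :=
  AnalyticOnD f ∧ ∃ C, ∀ z ∈ D1, (1 - ‖z‖ ^ 2) * ‖deriv f z‖ ≤ C

/-- Sup norm over the unit disc. -/
def supNormD (f : ℂ → ℂ) : ℝ := ⨆ z : D1, ‖f (z : ℂ)‖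

/-- Weighted composition operator uC_φ. -/
def wco (u φ : ℂ → ℂ) (f : ℂ → ℂ) : ℂ → ℂ := fun z => u z * f (φ z)

/-- Multiplication operator M_u. -/
def mult (u : ℂ → ℂ) (f : ℂ → ℂ) : ℂ → ℂ := fun z => u z * f z

/-- The weight u_{(n)} = ∏_{j=0}^{n-1} u ∘ φ_j. -/
def wprod (u φ : ℂ → ℂ) (n : ℕ) : ℂ → ℂ := fun z => ∏ j ∈ Finset.range n, u (φ^[j] z)

/-- Boundedness of an operator on the Bloch space. -/
def BddOnBloch (T : (ℂ → ℂ) → (ℂ → ℂ)) : Prop :=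
  ∃ C, ∀ f, InBloch f → InBloch (T f) ∧ blochNorm (T f) ≤ C * blochNorm f

/-- Operator norm on the Bloch space. -/
def opNormB (T : (ℂ → ℂ) → (ℂ → ℂ)) : ℝ :=
  sInf {C : ℝ | 0 ≤ C ∧ ∀ f, InBloch f → blochNorm (T f) ≤ C * blochNorm f}

/-- Invertibility of an operator on the Bloch space (bounded two-sided inverse). -/
def InvertibleOnBloch (T : (ℂ → ℂ) → (ℂ → ℂ)) : Prop :=
  BddOnBloch T ∧ ∃ S, BddOnBloch S ∧
    ∀ f, InBloch f → Set.EqOn (S (T f)) f D1 ∧ Set.EqOn (T (S f)) f D1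

/-- Spectrum of an operator acting on the Bloch space. -/
def blochSpectrum (T : (ℂ → ℂ) → (ℂ → ℂ)) : Set ℂ :=
  {lam | ¬ InvertibleOnBloch (fun f z => lam * f z - T f z)}

/-- Automorphism of the unit disc (Möbius form). -/
def IsDiscAuto (φ : ℂ → ℂ) : Prop :=
  ∃ lam a : ℂ, ‖lam‖ = 1 ∧ a ∈ D1 ∧ ∀ z, φ z = lam * (a - z) / (1 - (starRingEnd ℂ) a * z)

/-- Hyperbolic distance on the unit disc. -/
def hypDist (z w : ℂ) : ℝ :=
  (1 / 2) * Real.log ((1 + ‖(z - w) / (1 - (starRingEnd ℂ) z * w)‖) /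
    (1 - ‖(z - w) / (1 - (starRingEnd ℂ) z * w)‖))

/-- The disc algebra A(𝔻). -/
def InDiscAlgebra (u : ℂ → ℂ) : Prop :=
  ContinuousOn u (Metric.closedBall 0 1) ∧ AnalyticOnD u

/-- u is bounded away from zero on the unit disc. -/
def BoundedAwayFromZero (u : ℂ → ℂ) : Prop := ∃ δ > 0, ∀ z ∈ D1, δ ≤ ‖u z‖

/-- Parabolic automorphism with unique fixed point a on the unit circle (φ'(a)=1). -/
def IsParabolicAuto (φ : ℂ → ℂ) (a : ℂ) : Prop :=
  IsDiscAuto φ ∧ ‖a‖ = 1 ∧ φ a = a ∧ deriv φ a = 1 ∧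
    ∀ w, ‖w‖ ≤ 1 → φ w = w → w = a

/-- Hyperbolic automorphism with attractive fixed point a and repulsive fixed point b. -/
def IsHyperbolicAuto (φ : ℂ → ℂ) (a b : ℂ) : Prop :=
  IsDiscAuto φ ∧ ‖a‖ = 1 ∧ ‖b‖ = 1 ∧ a ≠ b ∧ φ a = a ∧ φ b = b ∧
    ∃ μ : ℝ, 0 < μ ∧ μ < 1 ∧ deriv φ a = (μ : ℂ)

/-- Square of the Dirichlet norm (normalized area measure on 𝔻). -/
def dirichletNormSq (f : ℂ → ℂ) : ℝ :=
  ‖f 0‖ ^ 2 + (1 / Real.pi) * ∫ z in D1, ‖deriv f z‖ ^ 2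

/-- Dirichlet norm. -/
def dirichletNorm (f : ℂ → ℂ) : ℝ := Real.sqrt (dirichletNormSq f)

/-- Membership in the Dirichlet space. -/
def InDirichlet (f : ℂ → ℂ) : Prop :=
  AnalyticOnD f ∧ MeasureTheory.IntegrableOn (fun z => ‖deriv f z‖ ^ 2) D1

/-- Boundedness of an operator on the Dirichlet space. -/
def BddOnDirichlet (T : (ℂ → ℂ) → (ℂ → ℂ)) : Prop :=
  ∃ C, ∀ f, InDirichlet f → InDirichlet (T f) ∧ dirichletNorm (T f) ≤ C * dirichletNorm f

/-- Operator norm on the Dirichlet space. -/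
def opNormDir (T : (ℂ → ℂ) → (ℂ → ℂ)) : ℝ :=
  sInf {C : ℝ | 0 ≤ C ∧ ∀ f, InDirichlet f → dirichletNorm (T f) ≤ C * dirichletNorm f}

/-- Invertibility of an operator on the Dirichlet space. -/
def InvertibleOnDirichlet (T : (ℂ → ℂ) → (ℂ → ℂ)) : Prop :=
  BddOnDirichlet T ∧ ∃ S, BddOnDirichlet S ∧
    ∀ f, InDirichlet f → Set.EqOn (S (T f)) f D1 ∧ Set.EqOn (T (S f)) f D1

/-- Spectrum of an operator on the Dirichlet space. -/
def dirichletSpectrum (T : (ℂ → ℂ) → (ℂ → ℂ)) : Set ℂ :=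
  {lam | ¬ InvertibleOnDirichlet (fun f z => lam * f z - T f z)}

/-- Operator norm of M_{u'} : B → H^∞_{v₁}. -/
def opNormBtoHv1 (u : ℂ → ℂ) : ℝ :=
  sInf {C : ℝ | 0 ≤ C ∧ ∀ f, InBloch f → ∀ z ∈ D1,
    (1 - ‖z‖ ^ 2) * ‖deriv u z * f z‖ ≤ C * blochNorm f}

/-- Operator norm of M_{u'} : 𝒟 → A². -/
def opNormDtoA2 (u : ℂ → ℂ) : ℝ :=
  sInf {C : ℝ | 0 ≤ C ∧ ∀ f, InDirichlet f →
    Real.sqrt ((1 / Real.pi) * ∫ z in D1, ‖deriv u z * f z‖ ^ 2) ≤ C * dirichletNorm f}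

/-- The logarithmic weight log(e/(1-|z|²)). -/
def logWeight (z : ℂ) : ℝ := Real.log (Real.exp 1 / (1 - ‖z‖ ^ 2))

/-- Characterization of multipliers of the Bloch space: u ∈ H^∞ and the log condition. -/
def MultBChar (u : ℂ → ℂ) : Prop :=
  (∃ M, ∀ z ∈ D1, ‖u z‖ ≤ M) ∧
  (∃ M, ∀ z ∈ D1, (1 - ‖z‖ ^ 2) * ‖deriv u z‖ * logWeight z ≤ M)

open Topology

lemma mem_D1_iff {z : ℂ} : z ∈ D1 ↔ ‖z‖ < 1 := mem_ball_zero_iff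

lemma zero_mem_D1 : (0 : ℂ) ∈ D1 := mem_D1_iff.2 (by simp)

lemma hypDist_zero_right {w : ℂ} (hw : ‖w‖ ≤ 1) : hypDist w 0 = Real.artanh ‖w‖ := by
  rw [Real.artanh_eq_half_log ⟨by linarith [norm_nonneg w], hw⟩]
  simp [hypDist]

lemma hypDist_zero_right_nonneg {w : ℂ} (hw : ‖w‖ ≤ 1) : 0 ≤ hypDist w 0 :=
  hypDist_zero_right hw ▸ Real.artanh_nonneg (norm_nonneg w)

lemma Real.hasDerivAt_artanh {x : ℝ} (hx : x ∈ Set.Ioo (-1) 1) :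
    HasDerivAt Real.artanh (1 / (1 - x ^ 2)) x := by
  have h_eq : (fun y => (Real.log (1 + y) - Real.log (1 - y)) / 2) =ᶠ[𝓝 x] Real.artanh := by
    filter_upwards [Ioo_mem_nhds hx.1 hx.2] with y hy
    rw [Real.artanh_eq_half_log (Ioo_subset_Icc_self hy),
      Real.log_div (by linarith [hy.1]) (by linarith [hy.2])]
    ring
  have hplus := ((hasDerivAt_id' x).const_add 1).log (by linarith [hx.1])
  have hminus := ((hasDerivAt_id' x).const_sub 1).log (by linarith [hx.2])
  refine ((hplus.sub hminus).div_const 2).congr_of_eventuallyEq h_eq.symm |>.congr_deriv ?_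
  have hplus_ne : 1 + x ≠ 0 := by linarith [hx.1]
  have hminus_ne : 1 - x ≠ 0 := by linarith [hx.2]
  rw [show 1 - x ^ 2 = (1 + x) * (1 - x) by ring]
  field_simp
  ring

def IsBlochBoundedBy (f : ℂ → ℂ) (M : ℝ) : Prop :=
  DifferentiableOn ℂ f D1 ∧ ∀ z ∈ D1, (1 - ‖z‖ ^ 2) * ‖deriv f z‖ ≤ M

lemma InBloch.isBlochBoundedBy {f : ℂ → ℂ} (hf : InBloch f) : IsBlochBoundedBy f (blochSemi f) := by
  obtain ⟨hdiff, C, hC⟩ := hf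
  have hbdd : BddAbove (Set.range fun z : D1 => (1 - ‖(z : ℂ)‖ ^ 2) * ‖deriv f z‖) := by
    refine ⟨C, ?_⟩
    rintro _ ⟨z, rfl⟩
    exact hC z z.2
  exact ⟨hdiff, fun z hz => le_ciSup hbdd ⟨z, hz⟩⟩

lemma IsBlochBoundedBy.blochSemi_le {f : ℂ → ℂ} {M : ℝ} (hf : IsBlochBoundedBy f M) :
    blochSemi f ≤ M :=
  haveI : Nonempty D1 := ⟨⟨0, zero_mem_D1⟩⟩
  ciSup_le fun z => hf.2 z z.2

lemma IsBlochBoundedBy.norm_sub_le {f : ℂ → ℂ} {M : ℝ} (hf : IsBlochBoundedBy f M) {w : ℂ}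
    (hw : w ∈ D1) : ‖f w - f 0‖ ≤ M * hypDist w 0 := by
  set r := ‖w‖
  have hr : r < 1 := mem_D1_iff.1 hw
  have hsegment : ∀ t ∈ Icc (0 : ℝ) 1, (t : ℂ) * w ∈ D1 ∧ t * r < 1 := by
    intro t ht
    have htr : t * r < 1 := by nlinarith [ht.1, ht.2, norm_nonneg w]
    refine ⟨mem_D1_iff.2 ?_, htr⟩
    rwa [norm_mul, Complex.norm_real, Real.norm_of_nonneg ht.1]
  have hderiv : ∀ t ∈ Icc (0 : ℝ) 1,
      HasDerivAt (fun s : ℝ => f (s * w) - f 0) (deriv f (t * w) * w) t := by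
    intro t ht
    have hf' := (hf.1.differentiableAt (isOpen_ball.mem_nhds (hsegment t ht).1)).hasDerivAt
    have hline := (hf'.comp (t : ℂ) ((hasDerivAt_id' (t : ℂ)).mul_const w)).comp_ofReal
    simpa using hline.sub_const (f 0)
  have hbound : ∀ t ∈ Icc (0 : ℝ) 1,
      HasDerivAt (fun s : ℝ => M * Real.artanh (s * r)) (M / (1 - (t * r) ^ 2) * r) t := by
    intro t ht
    have hmem : t * r ∈ Set.Ioo (-1) 1 :=
      ⟨by nlinarith [ht.1, norm_nonneg w], (hsegment t ht).2⟩
    have h := ((Real.hasDerivAt_artanh hmem).comp t ((hasDerivAt_id' t).mul_const r)).const_mul M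
    exact h.congr_deriv (by ring)
  have hcompare := image_norm_le_of_norm_deriv_right_le_deriv_boundary'
    (fun t ht => (hderiv t ht).continuousAt.continuousWithinAt)
    (fun t ht => (hderiv t (Ico_subset_Icc_self ht)).hasDerivWithinAt) (by simp)
    (fun t ht => (hbound t ht).continuousAt.continuousWithinAt)
    (fun t ht => (hbound t (Ico_subset_Icc_self ht)).hasDerivWithinAt) ?_
    (right_mem_Icc.2 zero_le_one)
  · simpa [hypDist_zero_right hr.le] using hcompare
  intro t ht
  obtain ⟨hzD, htr⟩ := hsegment t (Ico_subset_Icc_self ht)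
  have hweight : 0 < 1 - (t * r) ^ 2 := by nlinarith [mul_nonneg ht.1 (norm_nonneg w)]
  have hM : (1 - (t * r) ^ 2) * ‖deriv f (t * w)‖ ≤ M := by
    simpa [Real.norm_of_nonneg ht.1] using hf.2 _ hzD
  calc ‖deriv f (t * w) * w‖ = ‖deriv f (t * w)‖ * r := norm_mul _ _
    _ ≤ M / (1 - (t * r) ^ 2) * r := by
      gcongr
      rw [le_div_iff₀ hweight]
      linarith

section SelfMap

variable {f φ : ℂ → ℂ} {M : ℝ}

lemma IsBlochBoundedBy.comp (hf : IsBlochBoundedBy f M) (hmaps : MapsTo φ D1 D1)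
    (hφ : DifferentiableOn ℂ φ D1)
    (hpick : ∀ z ∈ D1, (1 - ‖z‖ ^ 2) * ‖deriv φ z‖ ≤ 1 - ‖φ z‖ ^ 2) :
    IsBlochBoundedBy (f ∘ φ) M := by
  have hfφ : ∀ z ∈ D1, DifferentiableAt ℂ f (φ z) := fun z hz =>
    hf.1.differentiableAt (isOpen_ball.mem_nhds (hmaps hz))
  refine ⟨hf.1.comp hφ hmaps, fun z hz => ?_⟩
  rw [deriv_comp z (hfφ z hz) (hφ.differentiableAt (isOpen_ball.mem_nhds hz)), norm_mul]
  calc (1 - ‖z‖ ^ 2) * (‖deriv f (φ z)‖ * ‖deriv φ z‖)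
      = ‖deriv f (φ z)‖ * ((1 - ‖z‖ ^ 2) * ‖deriv φ z‖) := by ring
    _ ≤ ‖deriv f (φ z)‖ * (1 - ‖φ z‖ ^ 2) := by gcongr; exact hpick z hz
    _ = (1 - ‖φ z‖ ^ 2) * ‖deriv f (φ z)‖ := mul_comm _ _
    _ ≤ M := hf.2 _ (hmaps hz)

lemma IsBlochBoundedBy.comp_iterate (hf : IsBlochBoundedBy f M) (hmaps : MapsTo φ D1 D1)
    (hφ : DifferentiableOn ℂ φ D1)
    (hpick : ∀ z ∈ D1, (1 - ‖z‖ ^ 2) * ‖deriv φ z‖ ≤ 1 - ‖φ z‖ ^ 2) (n : ℕ) :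
    IsBlochBoundedBy (f ∘ φ^[n]) M := by
  induction n with
  | zero => exact hf
  | succ n ih =>
    rw [Function.iterate_succ, ← Function.comp_assoc]
    exact ih.comp hmaps hφ hpick

lemma IsBlochBoundedBy.norm_iterate_sub_le (hf : IsBlochBoundedBy f M) (hmaps : MapsTo φ D1 D1)
    (hφ : DifferentiableOn ℂ φ D1)
    (hpick : ∀ z ∈ D1, (1 - ‖z‖ ^ 2) * ‖deriv φ z‖ ≤ 1 - ‖φ z‖ ^ 2) (n : ℕ) :
    ‖f (φ^[n] 0) - f 0‖ ≤ n * (M * hypDist (φ 0) 0) := by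
  induction n with
  | zero => simp
  | succ n ih =>
    have hstep : ‖f (φ^[n + 1] 0) - f (φ^[n] 0)‖ ≤ M * hypDist (φ 0) 0 := by
      rw [Function.iterate_succ_apply]
      exact (hf.comp_iterate hmaps hφ hpick n).norm_sub_le (hmaps zero_mem_D1)
    calc ‖f (φ^[n + 1] 0) - f 0‖
        ≤ ‖f (φ^[n + 1] 0) - f (φ^[n] 0)‖ + ‖f (φ^[n] 0) - f 0‖ :=
          norm_sub_le_norm_sub_add_norm_sub _ _ _
      _ ≤ M * hypDist (φ 0) 0 + n * (M * hypDist (φ 0) 0) := add_le_add hstep ih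
      _ = (n + 1 : ℕ) * (M * hypDist (φ 0) 0) := by push_cast; ring

lemma blochNorm_comp_iterate_le (hf : InBloch f) (hmaps : MapsTo φ D1 D1)
    (hφ : DifferentiableOn ℂ φ D1)
    (hpick : ∀ z ∈ D1, (1 - ‖z‖ ^ 2) * ‖deriv φ z‖ ≤ 1 - ‖φ z‖ ^ 2) (n : ℕ) :
    blochNorm (f ∘ φ^[n]) ≤ (1 + n * hypDist (φ 0) 0) * blochNorm f := by
  have hB := hf.isBlochBoundedBy
  have hρ : 0 ≤ n * hypDist (φ 0) 0 :=
    mul_nonneg n.cast_nonneg (hypDist_zero_right_nonneg (mem_D1_iff.1 (hmaps zero_mem_D1)).le)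
  have horbit : ‖f (φ^[n] 0)‖ ≤ ‖f 0‖ + n * (blochSemi f * hypDist (φ 0) 0) := by
    have := hB.norm_iterate_sub_le hmaps hφ hpick n
    have := norm_le_norm_add_norm_sub' (f (φ^[n] 0)) (f 0)
    linarith
  have hsemi := (hB.comp_iterate hmaps hφ hpick n).blochSemi_le
  simp only [blochNorm, Function.comp_apply] at hsemi ⊢
  nlinarith [mul_nonneg hρ (norm_nonneg (f 0))]

end SelfMap

lemma norm_one_sub_conj_mul_sq_sub_norm_sub_sq (a z : ℂ) :
    ‖1 - starRingEnd ℂ a * z‖ ^ 2 - ‖a - z‖ ^ 2 = (1 - ‖a‖ ^ 2) * (1 - ‖z‖ ^ 2) := by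
  simp only [Complex.sq_norm, Complex.normSq_apply, Complex.sub_re, Complex.sub_im,
    Complex.mul_re, Complex.mul_im, Complex.conj_re, Complex.conj_im, Complex.one_re,
    Complex.one_im]
  ring

lemma one_sub_conj_mul_ne_zero {a z : ℂ} (ha : ‖a‖ ≤ 1) (hz : ‖z‖ < 1) :
    1 - starRingEnd ℂ a * z ≠ 0 := by
  rw [sub_ne_zero]
  refine fun h => (?_ : ‖starRingEnd ℂ a * z‖ < 1).ne (by rw [← h, norm_one])
  rw [norm_mul, Complex.norm_conj]
  nlinarith [norm_nonneg a, norm_nonneg z]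

lemma hasDerivAt_mobius (lam a : ℂ) {z : ℂ} (hz : 1 - starRingEnd ℂ a * z ≠ 0) :
    HasDerivAt (fun w => lam * (a - w) / (1 - starRingEnd ℂ a * w))
      (-lam * (1 - starRingEnd ℂ a * a) / (1 - starRingEnd ℂ a * z) ^ 2) z := by
  have hnum := ((hasDerivAt_id' z).const_sub a).const_mul lam
  have hden := ((hasDerivAt_id' z).const_mul (starRingEnd ℂ a)).const_sub 1
  exact (hnum.div hden hz).congr_deriv (by ring)

namespace IsDiscAuto

variable {φ : ℂ → ℂ}

lemma mapsTo (hφ : IsDiscAuto φ) : MapsTo φ D1 D1 := by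
  obtain ⟨lam, a, hlam, ha, hform⟩ := hφ
  intro z hz
  rw [mem_D1_iff] at ha hz ⊢
  have hden := one_sub_conj_mul_ne_zero ha.le hz
  have hsq : ‖a - z‖ ^ 2 < ‖1 - starRingEnd ℂ a * z‖ ^ 2 := by
    have := norm_one_sub_conj_mul_sq_sub_norm_sub_sq a z
    nlinarith [mul_pos (sub_pos.2 (pow_lt_one₀ (norm_nonneg a) ha two_ne_zero))
      (sub_pos.2 (pow_lt_one₀ (norm_nonneg z) hz two_ne_zero))]
  rw [hform, norm_div, norm_mul, hlam, one_mul, div_lt_one (norm_pos_iff.2 hden)]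
  exact lt_of_pow_lt_pow_left₀ 2 (norm_nonneg _) hsq

lemma differentiableOn (hφ : IsDiscAuto φ) : DifferentiableOn ℂ φ D1 := by
  obtain ⟨lam, a, -, ha, hform⟩ := hφ
  obtain rfl : φ = _ := funext hform
  intro z hz
  have hden := one_sub_conj_mul_ne_zero (mem_D1_iff.1 ha).le (mem_D1_iff.1 hz)
  exact (hasDerivAt_mobius lam a hden).differentiableAt.differentiableWithinAt

lemma one_sub_norm_sq_mul_norm_deriv (hφ : IsDiscAuto φ) {z : ℂ} (hz : z ∈ D1) :
    (1 - ‖z‖ ^ 2) * ‖deriv φ z‖ = 1 - ‖φ z‖ ^ 2 := by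
  obtain ⟨lam, a, hlam, ha, hform⟩ := hφ
  obtain rfl : φ = _ := funext hform
  rw [mem_D1_iff] at ha hz
  have hden := one_sub_conj_mul_ne_zero ha.le hz
  have hnum : ‖1 - starRingEnd ℂ a * a‖ = 1 - ‖a‖ ^ 2 := by
    rw [Complex.conj_mul', ← Complex.ofReal_pow, ← Complex.ofReal_one, ← Complex.ofReal_sub,
      Complex.norm_real, Real.norm_of_nonneg (by nlinarith [norm_nonneg a])]
  rw [(hasDerivAt_mobius lam a hden).deriv]
  simp only [norm_div, norm_mul, norm_neg, hlam, norm_pow, hnum, one_mul, div_pow]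
  field_simp
  linarith [norm_one_sub_conj_mul_sq_sub_norm_sub_sq a z]

end IsDiscAuto

/-- iterate norm estimate via the hyperbolic distance. -/
theorem stmt_9 (φ : ℂ → ℂ) (hφ : IsDiscAuto φ) :
    ∀ n : ℕ, 1 ≤ n → opNormB (fun f => f ∘ φ^[n]) ≤ 1 + n * hypDist (φ 0) 0 := by
  intro n _
  have hρ : 0 ≤ hypDist (φ 0) 0 :=
    hypDist_zero_right_nonneg (mem_D1_iff.1 (hφ.mapsTo zero_mem_D1)).le
  refine csInf_le ⟨0, fun C hC => hC.1⟩ ⟨by positivity, fun f hf => ?_⟩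
  exact blochNorm_comp_iterate_le hf hφ.mapsTo hφ.differentiableOn
    (fun z hz => (hφ.one_sub_norm_sq_mul_norm_deriv hz).le) n
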